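/- Let N ≥ 2 be an integer, let arccot denote the inverse cotangent with range (0, π), and suppose α ∈ ℝ satisfies (1/2)·arccot( (−N+6)/(2√(N−1)) ) < α < (1/2)·arccot( (−N−2)/(2√(N−1)) ). Let v = (sin α, cos α) ∈ ℂ² and set φ_max = arccos( (1/4)·( −N + 2 − 2√(N−1)·(cos(2α)/sin(2α)) ) ). Then for every φ ∈ [−π, π], the one-step target probability satisfies |(A(φ)·v)₀|² ≤ |(A(φ_max)·v)₀|²; that is, φ_max is the optimal phase change in the region R₂. -/

import Mathlib

open Real Complex Matrix

/-- The generalized Grover iteration matrix with phase `φ` for a database of size `N`. -/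
noncomputable def groverA (N : ℕ) (φ : ℝ) : Matrix (Fin 2) (Fin 2) ℂ :=
  !![Complex.exp (φ * Complex.I) * ((1 - Complex.exp (φ * Complex.I)) / (N : ℂ) - 1),
     ((Real.sqrt ((N : ℝ) - 1) : ℂ) / (N : ℂ)) * (1 - Complex.exp (φ * Complex.I));
     ((Real.sqrt ((N : ℝ) - 1) : ℂ) / (N : ℂ)) * Complex.exp (φ * Complex.I) *
       (1 - Complex.exp (φ * Complex.I)),
     -(1 / (N : ℂ) + (1 - 1 / (N : ℂ)) * Complex.exp (φ * Complex.I))]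

/-- The one-step target probability: the squared modulus of the first component of `A(φ)·v`. -/
noncomputable def targetProb (N : ℕ) (φ : ℝ) (v : Fin 2 → ℂ) : ℝ :=
  ‖(groverA N φ).mulVec v 0‖ ^ 2

/-- The inverse cotangent with range `(0, π)`. -/
noncomputable def arccot (x : ℝ) : ℝ := Real.pi / 2 - Real.arctan x


/-!
Writing `x = cos φ` and `m = √(N - 1)`, so that `N = m² + 1`, the target probability of the real
vector `(s, c) = (sin α, cos α)` is a quadratic polynomial in `x` with leading coefficient
`-4 s m c / N² < 0`. It is therefore maximised at its vertex, and the vertex equals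
`(-N + 2 - 2 m cot 2α) / 4`. The bounds on `α` say exactly that `cot 2α` lies in the interval
where this vertex is in `[-1, 1]`, so it is attained by `φmax`; they also force `0 < α < π / 2`,
so that `s, c > 0`.
-/

lemma arccot_strictAnti : StrictAnti arccot := fun _ _ h => by
  unfold arccot
  linarith [arctan_strictMono h]

lemma arccot_mem_Ioo (x : ℝ) : arccot x ∈ Set.Ioo 0 π := by
  unfold arccot
  constructor <;> linarith [arctan_lt_pi_div_two x, neg_pi_div_two_lt_arctan x]

lemma arccot_cos_div_sin {θ : ℝ} (hθ : θ ∈ Set.Ioo 0 π) :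
    arccot (Real.cos θ / Real.sin θ) = θ := by
  have hcot : Real.cos θ / Real.sin θ = Real.tan (π / 2 - θ) := by
    rw [Real.tan_pi_div_two_sub, Real.tan_eq_sin_div_cos, inv_div]
  rw [arccot, hcot, Real.arctan_tan (by linarith [hθ.2]) (by linarith [hθ.1])]
  ring

lemma cos_div_sin_mem_of_arccot_lt_of_lt_arccot {a b θ : ℝ} (ha : arccot a < θ)
    (hb : θ < arccot b) :
    θ ∈ Set.Ioo 0 π ∧ b < Real.cos θ / Real.sin θ ∧ Real.cos θ / Real.sin θ < a := by
  have hθ : θ ∈ Set.Ioo 0 π :=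
    ⟨(arccot_mem_Ioo a).1.trans ha, hb.trans (arccot_mem_Ioo b).2⟩
  rw [← arccot_cos_div_sin hθ] at ha hb
  exact ⟨hθ, arccot_strictAnti.lt_iff_gt.1 hb, arccot_strictAnti.lt_iff_gt.1 ha⟩

/-- The target probability of `![s, c]` as a function of `x = cos φ`, with `N = m² + 1`. -/
noncomputable def targetProbCos (m s c x : ℝ) : ℝ :=
  ((1 - x) * (s - m * c) / (m ^ 2 + 1) - s) ^ 2 + (1 - x ^ 2) * (s + m * c) ^ 2 / (m ^ 2 + 1) ^ 2

lemma targetProbCos_le_vertex {m s c : ℝ} (hm : 0 ≤ m) (hs : 0 < s) (hc : 0 < c) (x : ℝ) :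
    targetProbCos m s c x ≤ targetProbCos m s c ((s - m * c) * (s * m + c) / (4 * s * c)) := by
  set x₀ := (s - m * c) * (s * m + c) / (4 * s * c)
  have hsq : targetProbCos m s c x₀ - targetProbCos m s c x
      = 4 * s * m * c / (m ^ 2 + 1) ^ 2 * (x - x₀) ^ 2 := by
    simp only [targetProbCos, x₀]
    field_simp
    ring
  linarith [show 0 ≤ 4 * s * m * c / (m ^ 2 + 1) ^ 2 * (x - x₀) ^ 2 by positivity]

lemma groverA_mulVec_zero (N : ℕ) (φ s c : ℝ) :
    (groverA N φ *ᵥ ![(s : ℂ), (c : ℂ)]) 0 = Complex.exp (φ * I) *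
      (((1 - Real.cos φ) * (s - √((N : ℝ) - 1) * c) / N - s : ℝ)
        + (-(Real.sin φ * (s + √((N : ℝ) - 1) * c) / N) : ℝ) * I) := by
  have hexp : Complex.exp (φ * I) = Real.cos φ + Real.sin φ * I := by
    rw [exp_mul_I, ← ofReal_cos, ← ofReal_sin]
  have hpyth : (Real.cos φ : ℂ) ^ 2 + (Real.sin φ : ℂ) ^ 2 = 1 := by
    exact_mod_cast Real.cos_sq_add_sin_sq φ
  simp only [groverA, mulVec, dotProduct, Fin.sum_univ_two, of_apply, cons_val', cons_val_zero,
    cons_val_one, empty_val', cons_val_fin_one, hexp]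
  generalize Real.cos φ = x at hpyth ⊢
  generalize Real.sin φ = y at hpyth ⊢
  have hunit : ((x : ℂ) + y * I) * (x - y * I) = 1 := by
    linear_combination hpyth - (y : ℂ) ^ 2 * I_sq
  push_cast
  -- `e (ē - 1) = 1 - e` for the unimodular `e = exp (φ I)`
  linear_combination -(√((N : ℝ) - 1) * c / N : ℂ) * hunit

lemma targetProb_eq_targetProbCos {N : ℕ} (hN : 1 ≤ N) (φ s c : ℝ) :
    targetProb N φ ![(s : ℂ), (c : ℂ)] =
      targetProbCos √((N : ℝ) - 1) s c (Real.cos φ) := by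
  have hN_eq : (N : ℝ) = √((N : ℝ) - 1) ^ 2 + 1 := by
    rw [sq_sqrt (by simp [hN])]
    ring
  rw [targetProb, groverA_mulVec_zero, norm_mul, norm_exp_ofReal_mul_I, one_mul,
    norm_add_mul_I, sq_sqrt (by positivity), targetProbCos, ← hN_eq]
  linear_combination (s + √((N : ℝ) - 1) * c) ^ 2 / (N : ℝ) ^ 2 * Real.sin_sq_add_cos_sq φ

theorem stmt_14 (N : ℕ) (hN : 2 ≤ N) (α : ℝ)
    (hα : (1 / 2) * arccot ((-(N : ℝ) + 6) / (2 * Real.sqrt ((N : ℝ) - 1))) < α ∧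
      α < (1 / 2) * arccot ((-(N : ℝ) - 2) / (2 * Real.sqrt ((N : ℝ) - 1))))
    (v : Fin 2 → ℂ) (hv : v = ![(Real.sin α : ℂ), (Real.cos α : ℂ)])
    (φmax : ℝ)
    (hφmax : φmax = Real.arccos ((1 / 4) * (-(N : ℝ) + 2
      - 2 * Real.sqrt ((N : ℝ) - 1) * (Real.cos (2 * α) / Real.sin (2 * α))))) :
    ∀ φ ∈ Set.Icc (-Real.pi) Real.pi,
      targetProb N φ v ≤ targetProb N φmax v := by
  intro φ _
  subst hv hφmax
  have hN1 : (1 : ℝ) < N := by exact_mod_cast hN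
  set m := √((N : ℝ) - 1)
  have hm : 0 < m := sqrt_pos.2 (by linarith)
  have hN_eq : (N : ℝ) = m ^ 2 + 1 := by
    rw [sq_sqrt (by linarith)]
    ring
  obtain ⟨h2α, hlo, hhi⟩ := cos_div_sin_mem_of_arccot_lt_of_lt_arccot
    (a := (-(N : ℝ) + 6) / (2 * m)) (b := (-(N : ℝ) - 2) / (2 * m)) (θ := 2 * α)
    (by linarith [hα.1]) (by linarith [hα.2])
  rw [div_lt_iff₀ (by positivity)] at hlo
  rw [lt_div_iff₀ (by positivity)] at hhi
  obtain ⟨h2α_pos, h2α_lt⟩ := h2α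
  have hs : 0 < Real.sin α := Real.sin_pos_of_pos_of_lt_pi (by linarith) (by linarith)
  have hc : 0 < Real.cos α := Real.cos_pos_of_mem_Ioo ⟨by linarith, by linarith⟩
  have hvertex : (1 / 4) * (-(N : ℝ) + 2 - 2 * m * (Real.cos (2 * α) / Real.sin (2 * α)))
      = (Real.sin α - m * Real.cos α) * (Real.sin α * m + Real.cos α)
        / (4 * Real.sin α * Real.cos α) := by
    rw [Real.cos_two_mul', Real.sin_two_mul, hN_eq]
    field_simp
    ring
  rw [targetProb_eq_targetProbCos (by omega), targetProb_eq_targetProbCos (by omega),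
    Real.cos_arccos (by linarith) (by linarith), hvertex]
  exact targetProbCos_le_vertex hm.le hs hc _
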